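/- arXiv:1701.00500 — 3 statements merged into one kernel-verified Lean document; each statement's English description precedes it below -/
import Mathlib

section
/- Let X be a δ-hyperbolic geodesic metric space. Then for every C > 0 there exists a C' > 0 such that whenever A and B are (1, C)-quasigeodesic subspaces of X with A ∩ B ≠ ∅, the union A ∪ B is a (1, C')-quasigeodesic subspace of X. -/
/-- `f` restricted to `[0, v]` is a (unit-speed) geodesic: `v ≥ 0` and `f` is an
isometric embedding of `[0, v]` into `X`. -/
def IsGeodesicOn {X : Type*} [MetricSpace X] (f : ℝ → X) (v : ℝ) : Prop :=
  0 ≤ v ∧ ∀ x ∈ Set.Icc (0 : ℝ) v, ∀ y ∈ Set.Icc (0 : ℝ) v, dist (f x) (f y) = |x - y|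

/-- `f : [0, v] → X` is a geodesic from `a` to `b`. -/
def IsGeodesicFrom {X : Type*} [MetricSpace X] (f : ℝ → X) (v : ℝ) (a b : X) : Prop :=
  IsGeodesicOn f v ∧ f 0 = a ∧ f v = b

/-- `X` is a geodesic metric space: any two points are joined by a geodesic. -/
def IsGeodesicSpace (X : Type*) [MetricSpace X] : Prop :=
  ∀ a b : X, ∃ (f : ℝ → X) (v : ℝ), IsGeodesicFrom f v a b

/-- `X` is δ-hyperbolic (in the sense of Gromov, via thin triangles): for any geodesic
triangle with vertices `a`, `b`, `c`, the side `[b, c]` lies in the δ-neighbourhood of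
the union of the sides `[a, b]` and `[a, c]`. -/
def IsDeltaHyperbolic (X : Type*) [MetricSpace X] (δ : ℝ) : Prop :=
  ∀ (a b c : X) (f₁ f₂ f₃ : ℝ → X) (v₁ v₂ v₃ : ℝ),
    IsGeodesicFrom f₁ v₁ a b → IsGeodesicFrom f₂ v₂ b c → IsGeodesicFrom f₃ v₃ a c →
    ∀ x ∈ Set.Icc (0 : ℝ) v₂,
      Metric.infDist (f₂ x) (f₁ '' Set.Icc (0 : ℝ) v₁ ∪ f₃ '' Set.Icc (0 : ℝ) v₃) ≤ δ

/-- `A` is a geodesic subspace of `X`: any two points of `A` are joined by a geodesic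
whose image lies in `A`. -/
def IsGeodesicSubspace {X : Type*} [MetricSpace X] (A : Set X) : Prop :=
  ∀ a ∈ A, ∀ b ∈ A, ∃ (f : ℝ → X) (v : ℝ),
    IsGeodesicFrom f v a b ∧ f '' Set.Icc (0 : ℝ) v ⊆ A

/-- `f` restricted to `[0, v]` is a `(lam, C)`-quasigeodesic. -/
def IsQuasigeodesicOn {X : Type*} [MetricSpace X] (lam C : ℝ) (f : ℝ → X) (v : ℝ) : Prop :=
  0 ≤ v ∧ ∀ x ∈ Set.Icc (0 : ℝ) v, ∀ y ∈ Set.Icc (0 : ℝ) v,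
    lam⁻¹ * |x - y| - C ≤ dist (f x) (f y) ∧ dist (f x) (f y) ≤ lam * |x - y| + C

/-- `A` is a `(lam, C)`-quasigeodesic subspace of `X`: any two points of `A` are joined
by a `(lam, C)`-quasigeodesic whose image lies in `A`. -/
def IsQuasigeodesicSubspace {X : Type*} [MetricSpace X] (lam C : ℝ) (A : Set X) : Prop :=
  ∀ a ∈ A, ∀ b ∈ A, ∃ (f : ℝ → X) (v : ℝ),
    IsQuasigeodesicOn lam C f v ∧ f 0 = a ∧ f v = b ∧ f '' Set.Icc (0 : ℝ) v ⊆ A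

/-- `S` is a geodesic segment: the image of an isometric embedding of a closed interval. -/
def IsGeodesicSegment {X : Type*} [MetricSpace X] (S : Set X) : Prop :=
  ∃ (f : ℝ → X) (v : ℝ), IsGeodesicOn f v ∧ S = f '' Set.Icc (0 : ℝ) v

/-!
Take `a ∈ A`, `b ∈ B`, `p ∈ A ∩ B`, a `(1, C)`-quasigeodesic `g` from `a` to `p` in `A` and one,
`h`, from `p` to `b` in `B`. A point `y` whose excess `d(a, y) + d(y, p) - d(a, p)` is small lies
close to every geodesic `[a, p]` (thin triangles), so `g` stays near `[a, p]`; conversely a gap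
argument on the parameter interval shows that `[a, p]` stays near `g`. Hence the triangle with sides
`g`, `h` and a geodesic `[a, b]` is uniformly thin, and by connectedness of `[a, b]` some point `c`
of it is close both to some `g s` and to some `h t`. Following `g` up to `s` and then `h` from `t`
on is a `(1, C')`-quasigeodesic from `a` to `b` in `A ∪ B`: it jumps boundedly at the junction and,
as `c` lies on a geodesic from `a` to `b`, its length exceeds `d(a, b)` by a bounded amount.
-/

open Set Metric

theorem exists_dist_lt_of_Icc_subset_union {S T : Set ℝ} {a b ε : ℝ} (hab : a ≤ b)
    (hcover : Icc a b ⊆ S ∪ T) (ha : a ∈ S) (hb : b ∈ T) (hε : 0 < ε) :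
    ∃ x ∈ S ∩ Icc a b, ∃ y ∈ T ∩ Icc a b, dist x y < ε := by
  obtain ⟨z, -, hzS, hzT⟩ := isPreconnected_closed_iff.1 isPreconnected_Icc
    (closure (S ∩ Icc a b)) (closure (T ∩ Icc a b)) isClosed_closure isClosed_closure
    (fun x hx => (hcover hx).imp (fun h => subset_closure ⟨h, hx⟩)
      (fun h => subset_closure ⟨h, hx⟩))
    ⟨a, left_mem_Icc.2 hab, subset_closure ⟨ha, left_mem_Icc.2 hab⟩⟩
    ⟨b, right_mem_Icc.2 hab, subset_closure ⟨hb, right_mem_Icc.2 hab⟩⟩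
  obtain ⟨x, hx, hzx⟩ := Metric.mem_closure_iff.1 hzS (ε / 2) (half_pos hε)
  obtain ⟨y, hy, hzy⟩ := Metric.mem_closure_iff.1 hzT (ε / 2) (half_pos hε)
  refine ⟨x, hx, y, hy, ?_⟩
  linarith [dist_triangle_left x y z]

section

variable {X : Type*} [MetricSpace X] {δ : ℝ}

theorem IsGeodesicOn.dist_eq_sub {f : ℝ → X} {v x y : ℝ} (hf : IsGeodesicOn f v)
    (hx : x ∈ Icc 0 v) (hy : y ∈ Icc 0 v) (hxy : x ≤ y) : dist (f x) (f y) = y - x := by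
  rw [hf.2 x hx y hy, abs_sub_comm, abs_of_nonneg (sub_nonneg.2 hxy)]

namespace IsGeodesicFrom

variable {f : ℝ → X} {v x : ℝ} {a b : X}

theorem dist_left (hf : IsGeodesicFrom f v a b) (hx : x ∈ Icc 0 v) : dist a (f x) = x := by
  rw [← hf.2.1, hf.1.dist_eq_sub (left_mem_Icc.2 hf.1.1) hx hx.1, sub_zero]

theorem dist_right (hf : IsGeodesicFrom f v a b) (hx : x ∈ Icc 0 v) :
    dist (f x) b = v - x := by
  rw [← hf.2.2, hf.1.dist_eq_sub hx (right_mem_Icc.2 hf.1.1) hx.2]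

theorem dist_eq (hf : IsGeodesicFrom f v a b) : dist a b = v := by
  simpa [hf.2.2] using hf.dist_left (right_mem_Icc.2 hf.1.1)

theorem dist_add_dist_of_mem_image (hf : IsGeodesicFrom f v a b) {z : X}
    (hz : z ∈ f '' Icc 0 v) : dist a z + dist z b = dist a b := by
  obtain ⟨x, hx, rfl⟩ := hz
  rw [hf.dist_left hx, hf.dist_right hx, hf.dist_eq]
  ring

theorem reverse (hf : IsGeodesicFrom f v a b) : IsGeodesicFrom (fun x => f (v - x)) v b a := by
  have hmem : ∀ x ∈ Icc 0 v, v - x ∈ Icc 0 v := fun x hx => ⟨by linarith [hx.2], by linarith [hx.1]⟩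
  refine ⟨⟨hf.1.1, fun x hx y hy => ?_⟩, by simpa using hf.2.2, by simpa using hf.2.1⟩
  rw [hf.1.2 _ (hmem x hx) _ (hmem y hy), abs_sub_comm]
  ring_nf

end IsGeodesicFrom

namespace IsQuasigeodesicOn

variable {f : ℝ → X} {lam C v x y : ℝ}

theorem mono {C' : ℝ} (hf : IsQuasigeodesicOn lam C f v) (hC : C ≤ C') :
    IsQuasigeodesicOn lam C' f v :=
  ⟨hf.1, fun x hx y hy => ⟨by linarith [(hf.2 x hx y hy).1], by linarith [(hf.2 x hx y hy).2]⟩⟩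

theorem nonneg (hf : IsQuasigeodesicOn lam C f v) : 0 ≤ C := by
  have h0 := left_mem_Icc.2 hf.1
  simpa using (hf.2 0 h0 0 h0).1

theorem le_dist (hf : IsQuasigeodesicOn 1 C f v) (hx : x ∈ Icc 0 v) (hy : y ∈ Icc 0 v)
    (hxy : x ≤ y) : y - x - C ≤ dist (f x) (f y) := by
  simpa [abs_sub_comm x y, abs_of_nonneg (sub_nonneg.2 hxy)] using (hf.2 x hx y hy).1

theorem dist_le (hf : IsQuasigeodesicOn 1 C f v) (hx : x ∈ Icc 0 v) (hy : y ∈ Icc 0 v)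
    (hxy : x ≤ y) : dist (f x) (f y) ≤ y - x + C := by
  simpa [abs_sub_comm x y, abs_of_nonneg (sub_nonneg.2 hxy)] using (hf.2 x hx y hy).2

theorem of_le (hv : 0 ≤ v)
    (H : ∀ x ∈ Icc 0 v, ∀ y ∈ Icc 0 v, x ≤ y →
      y - x - C ≤ dist (f x) (f y) ∧ dist (f x) (f y) ≤ y - x + C) :
    IsQuasigeodesicOn 1 C f v := by
  refine ⟨hv, fun x hx y hy => ?_⟩
  simp only [inv_one, one_mul]
  rcases le_total x y with hxy | hxy
  · rw [abs_sub_comm, abs_of_nonneg (sub_nonneg.2 hxy)]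
    exact H x hx y hy hxy
  · rw [abs_of_nonneg (sub_nonneg.2 hxy), dist_comm]
    exact H y hy x hx hxy

end IsQuasigeodesicOn

theorem IsDeltaHyperbolic.mono {δ' : ℝ} (h : IsDeltaHyperbolic X δ) (hδ : δ ≤ δ') :
    IsDeltaHyperbolic X δ' :=
  fun a b c f₁ f₂ f₃ v₁ v₂ v₃ h₁ h₂ h₃ x hx => (h a b c f₁ f₂ f₃ v₁ v₂ v₃ h₁ h₂ h₃ x hx).trans hδ

theorem IsDeltaHyperbolic.exists_dist_lt (hhyp : IsDeltaHyperbolic X δ) {a b c : X}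
    {f₁ f₂ f₃ : ℝ → X} {v₁ v₂ v₃ x : ℝ} (h₁ : IsGeodesicFrom f₁ v₁ a b)
    (h₂ : IsGeodesicFrom f₂ v₂ b c) (h₃ : IsGeodesicFrom f₃ v₃ a c) (hx : x ∈ Icc 0 v₂) :
    ∃ z ∈ f₁ '' Icc 0 v₁ ∪ f₃ '' Icc 0 v₃, dist (f₂ x) z < δ + 1 :=
  (infDist_lt_iff ⟨f₁ 0, Or.inl (mem_image_of_mem f₁ (left_mem_Icc.2 h₁.1.1))⟩).1
    ((hhyp a b c f₁ f₂ f₃ v₁ v₂ v₃ h₁ h₂ h₃ x hx).trans_lt (lt_add_one δ))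

theorem IsDeltaHyperbolic.exists_dist_le_of_dist_add_dist_le (hgeo : IsGeodesicSpace X)
    (hhyp : IsDeltaHyperbolic X δ) {γ : ℝ → X} {L E : ℝ} {a b y : X}
    (hγ : IsGeodesicFrom γ L a b) (hy : dist a y + dist y b ≤ dist a b + E) :
    ∃ r ∈ Icc 0 L, dist y (γ r) ≤ E / 2 + 2 * δ + 2 := by
  obtain ⟨f₁, v₁, hf₁⟩ := hgeo y a
  obtain ⟨f₃, v₃, hf₃⟩ := hgeo y b
  have hL := hγ.dist_eq
  have hya := dist_triangle y a b
  have hyb := dist_triangle a b y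
  rw [dist_comm y a] at hya
  rw [dist_comm b y] at hyb
  -- `γ r` is the point of `[a, b]` at distance `(y | b)_a` (the Gromov product) from `a`.
  set r := (dist a y + L - dist y b) / 2 with hr_def
  have hr : r ∈ Icc 0 L := ⟨by linarith, by linarith⟩
  refine ⟨r, hr, ?_⟩
  obtain ⟨z, hz, hdz⟩ := hhyp.exists_dist_lt hf₁ hγ hf₃ hr
  have hyz := dist_triangle y z (γ r)
  rw [dist_comm (γ r) z] at hdz
  rcases hz with hz | hz
  · have hz' := hf₁.dist_add_dist_of_mem_image hz
    have := hγ.dist_left hr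
    have := dist_triangle a z (γ r)
    rw [dist_comm z a, dist_comm y a] at hz'
    linarith
  · have hz' := hf₃.dist_add_dist_of_mem_image hz
    have := hγ.dist_right hr
    have := dist_triangle (γ r) z b
    rw [dist_comm (γ r) z] at this
    linarith

theorem IsQuasigeodesicOn.exists_dist_le_of_forall_exists_dist_le {g γ : ℝ → X} {C L R u : ℝ}
    (hg : IsQuasigeodesicOn 1 C g u) (hγ : IsGeodesicFrom γ L (g 0) (g u))
    (hnear : ∀ s ∈ Icc 0 u, ∃ r ∈ Icc 0 L, dist (g s) (γ r) ≤ R) :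
    ∀ r ∈ Icc 0 L, ∃ s ∈ Icc 0 u, dist (γ r) (g s) ≤ 3 * R + C + 1 := by
  intro r hr
  have hR : 0 ≤ R := by
    obtain ⟨_, -, h⟩ := hnear 0 (left_mem_Icc.2 hg.1)
    exact dist_nonneg.trans h
  obtain ⟨s₁, ⟨⟨r₁, hr₁, hr₁r, hd₁⟩, hs₁⟩, s₂, ⟨⟨r₂, hr₂, hrr₂, hd₂⟩, hs₂⟩, hs₁₂⟩ :=
    exists_dist_lt_of_Icc_subset_union
      (S := {s | ∃ r' ∈ Icc 0 L, r' ≤ r ∧ dist (g s) (γ r') ≤ R})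
      (T := {s | ∃ r' ∈ Icc 0 L, r ≤ r' ∧ dist (g s) (γ r') ≤ R}) hg.1
      (fun s hs => by
        obtain ⟨r', hr', hd⟩ := hnear s hs
        exact (le_total r' r).imp (fun h => ⟨r', hr', h, hd⟩) (fun h => ⟨r', hr', h, hd⟩))
      ⟨0, left_mem_Icc.2 hγ.1.1, hr.1, by rw [hγ.2.1, dist_self]; exact hR⟩
      ⟨L, right_mem_Icc.2 hγ.1.1, hr.2, by rw [hγ.2.2, dist_self]; exact hR⟩ one_pos
  refine ⟨s₁, hs₁, ?_⟩
  have hgg : dist (g s₁) (g s₂) ≤ |s₁ - s₂| + C := by simpa using (hg.2 s₁ hs₁ s₂ hs₂).2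
  rw [← Real.dist_eq] at hgg
  have hγ₁ := hγ.1.dist_eq_sub hr₁ hr hr₁r
  have hγ₁₂ := hγ.1.dist_eq_sub hr₁ hr₂ (hr₁r.trans hrr₂)
  have := dist_triangle4 (γ r₁) (g s₁) (g s₂) (γ r₂)
  have := dist_triangle (γ r) (γ r₁) (g s₁)
  rw [dist_comm (γ r₁) (g s₁), dist_comm (γ r) (γ r₁)] at *
  linarith

theorem IsDeltaHyperbolic.exists_dist_quasigeodesic_le (hgeo : IsGeodesicSpace X)
    (hhyp : IsDeltaHyperbolic X δ) {g γ : ℝ → X} {C L u : ℝ}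
    (hg : IsQuasigeodesicOn 1 C g u) (hγ : IsGeodesicFrom γ L (g 0) (g u)) :
    ∀ r ∈ Icc 0 L, ∃ s ∈ Icc 0 u, dist (γ r) (g s) ≤ 11 * C / 2 + 6 * δ + 7 := by
  have hnear : ∀ s ∈ Icc 0 u, ∃ r ∈ Icc 0 L, dist (g s) (γ r) ≤ 3 * C / 2 + 2 * δ + 2 := by
    intro s hs
    refine hhyp.exists_dist_le_of_dist_add_dist_le hgeo hγ ?_
    have h0 := left_mem_Icc.2 hg.1
    have hu := right_mem_Icc.2 hg.1
    linarith [hg.dist_le h0 hs hs.1, hg.dist_le hs hu hs.2, hg.le_dist h0 hu hg.1]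
  intro r hr
  obtain ⟨s, hs, hd⟩ := hg.exists_dist_le_of_forall_exists_dist_le hγ hnear r hr
  exact ⟨s, hs, by linarith⟩

/-- `g` until time `s`, then `h` from time `t` on. The unit pause at `g s` in between keeps both
endpoints right even when `s = 0` and `t` is the end time of `h`. -/
noncomputable def splice {α : Type*} (g h : ℝ → α) (s t x : ℝ) : α :=
  if x < s + 1 then g (min x s) else h (x - (s + 1) + t)

section Splice

variable {α : Type*} {g h : ℝ → α} {s t x : ℝ}

theorem splice_of_lt (hx : x < s + 1) : splice g h s t x = g (min x s) := if_pos hx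

theorem splice_of_le (hx : s + 1 ≤ x) : splice g h s t x = h (x - (s + 1) + t) :=
  if_neg hx.not_gt

theorem min_mem_Icc {u : ℝ} (hs : s ∈ Icc 0 u) (hx : 0 ≤ x) : min x s ∈ Icc 0 u :=
  ⟨le_min hx hs.1, (min_le_right x s).trans hs.2⟩

theorem isQuasigeodesicOn_splice [MetricSpace α] {C K u w : ℝ}
    (hg : IsQuasigeodesicOn 1 C g u) (hh : IsQuasigeodesicOn 1 C h w) (hs : s ∈ Icc 0 u)
    (ht : t ∈ Icc 0 w) (hjump : dist (g s) (h t) ≤ K) (hlen : s + (w - t) ≤ dist (g 0) (h w) + K) :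
    IsQuasigeodesicOn 1 (2 * C + K + 1) (splice g h s t) (s + 1 + (w - t)) := by
  have hC := hg.nonneg
  have hK := dist_nonneg.trans hjump
  have hh_mem : ∀ y ∈ Icc 0 (s + 1 + (w - t)), s + 1 ≤ y → y - (s + 1) + t ∈ Icc 0 w :=
    fun y hy hsy => ⟨by linarith [ht.1], by linarith [hy.2]⟩
  refine IsQuasigeodesicOn.of_le (by linarith [hs.1, ht.2]) fun x hx y hy hxy => ?_
  have hx' := min_mem_Icc hs hx.1
  rcases lt_or_ge y (s + 1) with hys | hsy
  · rw [splice_of_lt (hxy.trans_lt hys), splice_of_lt hys]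
    have hy' := min_mem_Icc hs hy.1
    have hmin : y - x - 1 ≤ min y s - min x s ∧ min y s - min x s ≤ y - x := by grind
    have hxy' : min x s ≤ min y s := min_le_min_right s hxy
    constructor <;> linarith [hg.le_dist hx' hy' hxy', hg.dist_le hx' hy' hxy']
  have hy' := hh_mem y hy hsy
  rcases lt_or_ge x (s + 1) with hxs | hsx
  · rw [splice_of_lt hxs, splice_of_le hsy]
    have hmin : x - 1 ≤ min x s ∧ min x s ≤ x :=
      ⟨le_min (by linarith) (by linarith), min_le_left x s⟩
    have hty : t ≤ y - (s + 1) + t := by linarith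
    constructor
    · have := dist_triangle4 (g 0) (g (min x s)) (h (y - (s + 1) + t)) (h w)
      linarith [hg.dist_le (left_mem_Icc.2 hg.1) hx' hx'.1,
        hh.dist_le hy' (right_mem_Icc.2 hh.1) hy'.2]
    · have := dist_triangle4 (g (min x s)) (g s) (h t) (h (y - (s + 1) + t))
      linarith [hg.dist_le hx' hs (min_le_right x s), hh.dist_le ht hy' hty]
  · rw [splice_of_le hsx, splice_of_le hsy]
    have hx'' := hh_mem x hx hsx
    have hxy' : x - (s + 1) + t ≤ y - (s + 1) + t := by linarith
    constructor <;> linarith [hh.le_dist hx'' hy' hxy', hh.dist_le hx'' hy' hxy']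

theorem splice_zero (hs : 0 ≤ s) : splice g h s t 0 = g 0 := by
  rw [splice_of_lt (by linarith), min_eq_left hs]

theorem splice_end {w : ℝ} (ht : t ≤ w) : splice g h s t (s + 1 + (w - t)) = h w := by
  rw [splice_of_le (by linarith)]
  ring_nf

theorem image_splice_subset {u w : ℝ} (hs : s ∈ Icc 0 u) (ht : t ∈ Icc 0 w) :
    splice g h s t '' Icc 0 (s + 1 + (w - t)) ⊆ g '' Icc 0 u ∪ h '' Icc 0 w := by
  rintro _ ⟨x, hx, rfl⟩
  rcases lt_or_ge x (s + 1) with hxs | hsx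
  · rw [splice_of_lt hxs]
    exact Or.inl (mem_image_of_mem g (min_mem_Icc hs hx.1))
  · rw [splice_of_le hsx]
    exact Or.inr (mem_image_of_mem h ⟨by linarith [ht.1], by linarith [hx.2]⟩)

end Splice

theorem IsDeltaHyperbolic.quasigeodesic_triangle_thin (hgeo : IsGeodesicSpace X)
    (hhyp : IsDeltaHyperbolic X δ) {g h γ : ℝ → X} {C u w D : ℝ}
    (hg : IsQuasigeodesicOn 1 C g u) (hh : IsQuasigeodesicOn 1 C h w) (hgh : g u = h 0)
    (hγ : IsGeodesicFrom γ D (g 0) (h w)) :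
    ∀ x ∈ Icc 0 D, (∃ s ∈ Icc 0 u, dist (γ x) (g s) ≤ 11 * C / 2 + 7 * δ + 8) ∨
      ∃ t ∈ Icc 0 w, dist (γ x) (h t) ≤ 11 * C / 2 + 7 * δ + 8 := by
  intro x hx
  obtain ⟨γ₁, L₁, hγ₁⟩ := hgeo (g 0) (g u)
  obtain ⟨γ₂, L₂, hγ₂⟩ := hgeo (h 0) (h w)
  rw [← hgh] at hγ₂
  obtain ⟨z, hz, hxz⟩ := hhyp.exists_dist_lt hγ₁.reverse hγ hγ₂ hx
  rcases hz with ⟨q, hq, rfl⟩ | ⟨q, hq, rfl⟩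
  · obtain ⟨s, hs, hd⟩ := hhyp.exists_dist_quasigeodesic_le hgeo hg hγ₁ (L₁ - q)
      ⟨by linarith [hq.2], by linarith [hq.1]⟩
    exact .inl ⟨s, hs, by linarith [dist_triangle (γ x) (γ₁ (L₁ - q)) (g s)]⟩
  · rw [hgh] at hγ₂
    obtain ⟨t, ht, hd⟩ := hhyp.exists_dist_quasigeodesic_le hgeo hh hγ₂ q hq
    exact .inr ⟨t, ht, by linarith [dist_triangle (γ x) (γ₂ q) (h t)]⟩

theorem IsDeltaHyperbolic.exists_point_near_both_quasigeodesics (hgeo : IsGeodesicSpace X)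
    (hhyp : IsDeltaHyperbolic X δ) {g h γ : ℝ → X} {C u w D : ℝ}
    (hg : IsQuasigeodesicOn 1 C g u) (hh : IsQuasigeodesicOn 1 C h w) (hgh : g u = h 0)
    (hγ : IsGeodesicFrom γ D (g 0) (h w)) :
    ∃ x ∈ Icc 0 D, ∃ s ∈ Icc 0 u, ∃ t ∈ Icc 0 w,
      dist (γ x) (g s) ≤ 11 * C / 2 + 7 * δ + 8 ∧ dist (γ x) (h t) ≤ 11 * C / 2 + 7 * δ + 9 := by
  set ε := 11 * C / 2 + 7 * δ + 8 with hε_def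
  have hthin := hhyp.quasigeodesic_triangle_thin hgeo hg hh hgh hγ
  have hε : 0 ≤ ε := by
    rcases hthin 0 (left_mem_Icc.2 hγ.1.1) with ⟨_, -, hd⟩ | ⟨_, -, hd⟩ <;>
      exact dist_nonneg.trans hd
  obtain ⟨x₁, ⟨⟨s, hs, hs₁⟩, hx₁⟩, x₂, ⟨⟨t, ht, ht₂⟩, hx₂⟩, hx₁₂⟩ :=
    exists_dist_lt_of_Icc_subset_union
      (S := {x | ∃ s ∈ Icc 0 u, dist (γ x) (g s) ≤ ε})
      (T := {x | ∃ t ∈ Icc 0 w, dist (γ x) (h t) ≤ ε}) hγ.1.1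
      hthin ⟨0, left_mem_Icc.2 hg.1, by rwa [hγ.2.1, dist_self]⟩
      ⟨w, right_mem_Icc.2 hh.1, by rwa [hγ.2.2, dist_self]⟩ one_pos
  have hγ₁₂ : dist (γ x₁) (γ x₂) = dist x₁ x₂ := hγ.1.2 x₁ hx₁ x₂ hx₂
  exact ⟨x₁, hx₁, s, hs, t, ht, hs₁,
    by linarith [dist_triangle (γ x₁) (γ x₂) (h t)]⟩

theorem IsDeltaHyperbolic.exists_quasigeodesicOn_union (hgeo : IsGeodesicSpace X)
    (hhyp : IsDeltaHyperbolic X δ) {C : ℝ} {A B : Set X}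
    (hA : IsQuasigeodesicSubspace 1 C A) (hB : IsQuasigeodesicSubspace 1 C B)
    {a b p : X} (hpA : p ∈ A) (hpB : p ∈ B) (ha : a ∈ A) (hb : b ∈ B) :
    ∃ (f : ℝ → X) (v : ℝ), IsQuasigeodesicOn 1 (15 * C + 14 * δ + 18) f v ∧
      f 0 = a ∧ f v = b ∧ f '' Icc 0 v ⊆ A ∪ B := by
  obtain ⟨g, u, hg, rfl, rfl, hgA⟩ := hA a ha p hpA
  obtain ⟨h, w, hh, hh0, rfl, hhB⟩ := hB (g u) hpB b hb
  obtain ⟨γ, D, hγ⟩ := hgeo (g 0) (h w)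
  obtain ⟨x, hx, s, hs, t, ht, hgs, hht⟩ :=
    hhyp.exists_point_near_both_quasigeodesics hgeo hg hh hh0.symm hγ
  have hC := hg.nonneg
  refine ⟨splice g h s t, s + 1 + (w - t), (isQuasigeodesicOn_splice hg hh hs ht
    (K := 11 * C + 14 * δ + 17 + 2 * C) ?_ ?_).mono (by linarith), splice_zero hs.1,
    splice_end ht.2, (image_splice_subset hs ht).trans (union_subset_union hgA hhB)⟩
  · linarith [dist_triangle_left (g s) (h t) (γ x)]
  · have := hγ.dist_add_dist_of_mem_image (mem_image_of_mem γ hx)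
    have := dist_triangle (g 0) (γ x) (g s)
    have := dist_triangle (h t) (γ x) (h w)
    rw [dist_comm (h t) (γ x)] at *
    linarith [hg.le_dist (left_mem_Icc.2 hg.1) hs hs.1, hh.le_dist ht (right_mem_Icc.2 hh.1) ht.2]

theorem IsQuasigeodesicSubspace.exists_quasigeodesicOn_of_subset {lam C C' : ℝ} {A A' : Set X}
    (hA : IsQuasigeodesicSubspace lam C A) (hC : C ≤ C') (hAA' : A ⊆ A') {a b : X}
    (ha : a ∈ A) (hb : b ∈ A) :
    ∃ (f : ℝ → X) (v : ℝ), IsQuasigeodesicOn lam C' f v ∧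
      f 0 = a ∧ f v = b ∧ f '' Icc 0 v ⊆ A' :=
  let ⟨f, v, hf, h0, hv, hfA⟩ := hA a ha b hb
  ⟨f, v, hf.mono hC, h0, hv, hfA.trans hAA'⟩

end

/-- In a δ-hyperbolic geodesic space, for every C > 0 there is C' > 0 such
that the union of two intersecting (1, C)-quasigeodesic subspaces is a
(1, C')-quasigeodesic subspace. -/
theorem union_of_one_quasigeodesic_subspaces {X : Type*} [MetricSpace X] (δ : ℝ)
    (hgeo : IsGeodesicSpace X) (hhyp : IsDeltaHyperbolic X δ) :
    ∀ C : ℝ, 0 < C → ∃ C' : ℝ, 0 < C' ∧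
      ∀ A B : Set X, IsQuasigeodesicSubspace 1 C A → IsQuasigeodesicSubspace 1 C B →
        (A ∩ B).Nonempty → IsQuasigeodesicSubspace 1 C' (A ∪ B) := by
  intro C hC
  have hδ : 0 ≤ max δ 0 := le_max_right δ 0
  have hhyp' := hhyp.mono (le_max_left δ 0)
  have hCC' : C ≤ 15 * C + 14 * max δ 0 + 18 := by linarith
  refine ⟨15 * C + 14 * max δ 0 + 18, by positivity, ?_⟩
  rintro A B hA hB ⟨p, hpA, hpB⟩ a (ha | ha) b (hb | hb)
  · exact hA.exists_quasigeodesicOn_of_subset hCC' subset_union_left ha hb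
  · exact hhyp'.exists_quasigeodesicOn_union hgeo hA hB hpA hpB ha hb
  · rw [union_comm]
    exact hhyp'.exists_quasigeodesicOn_union hgeo hB hA hpB hpA ha hb
  · exact hB.exists_quasigeodesicOn_of_subset hCC' subset_union_right ha hb
end

section
/- Let X be a geodesic metric space and suppose there exist λ > 0 and C > 0 such that every subset of X which is a connected union of (the images of) four geodesic segments is a (λ, C)-quasigeodesic subspace of X. Then X is δ-hyperbolic with δ = λ²(2C + 1) + C + 1. -/
/-! Let `p` be a point of the side `[b, c]` of a geodesic triangle. Unless `p` is within `C + 1`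
of `c`, cut the open piece of length `C + 1` after `p` out of `[b, c]`: the two other sides and
the two remaining pieces of `[b, c]` form a connected union of four segments, so `p` is joined
inside it to the point `q` at the far end of the gap by a `(λ, C)`-quasigeodesic `g`, whose
parameter interval has length at most `λ (d(p, q) + C) = λ (2C + 1)`. Such a `g` cannot jump
across the gap, since jumps of `g` are coarsely at most `C`, so it meets `[a, b] ∪ [a, c]`,
within distance `λ² (2C + 1) + C` of `p`. -/

open Set Metric

theorem IsPreconnected.exists_dist_lt_of_subset_union {α : Type*} [PseudoMetricSpace α]
    {S P Q : Set α} (hS : IsPreconnected S) (hPQ : S ⊆ P ∪ Q) (hP : (S ∩ P).Nonempty)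
    (hQ : (S ∩ Q).Nonempty) {ε : ℝ} (hε : 0 < ε) :
    ∃ p ∈ S ∩ P, ∃ q ∈ S ∩ Q, dist p q < ε := by
  have hε2 := half_pos hε
  have hcover : S ⊆ thickening (ε / 2) (S ∩ P) ∪ thickening (ε / 2) (S ∩ Q) := fun z hz =>
    (hPQ hz).imp (fun h => self_subset_thickening hε2 _ ⟨hz, h⟩)
      (fun h => self_subset_thickening hε2 _ ⟨hz, h⟩)
  obtain ⟨p, hp⟩ := hP
  obtain ⟨q, hq⟩ := hQ
  obtain ⟨z, -, hzP, hzQ⟩ := hS _ _ isOpen_thickening isOpen_thickening hcover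
    ⟨p, hp.1, self_subset_thickening hε2 _ hp⟩ ⟨q, hq.1, self_subset_thickening hε2 _ hq⟩
  obtain ⟨p', hp', hzp'⟩ := mem_thickening_iff.1 hzP
  obtain ⟨q', hq', hzq'⟩ := mem_thickening_iff.1 hzQ
  exact ⟨p', hp', q', hq', by linarith [dist_triangle_left p' q' z]⟩

section

variable {X : Type*} [MetricSpace X]

namespace IsGeodesicOn

variable {f : ℝ → X} {v : ℝ}

theorem continuousOn (h : IsGeodesicOn f v) : ContinuousOn f (Icc 0 v) := by
  refine LipschitzOnWith.continuousOn (K := 1) fun x hx y hy => ?_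
  rw [edist_dist, edist_dist, h.2 x hx y hy, Real.dist_eq, ENNReal.coe_one, one_mul]

theorem left_mem_image (h : IsGeodesicOn f v) : f 0 ∈ f '' Icc 0 v :=
  mem_image_of_mem f ⟨le_rfl, h.1⟩

theorem right_mem_image (h : IsGeodesicOn f v) : f v ∈ f '' Icc 0 v :=
  mem_image_of_mem f ⟨h.1, le_rfl⟩

theorem isGeodesicSegment_image {s w : ℝ} (h : IsGeodesicOn f v) (hs : 0 ≤ s) (hsw : s ≤ w)
    (hw : w ≤ v) : IsGeodesicSegment (f '' Icc s w) := by
  refine ⟨fun t => f (s + t), w - s, ⟨sub_nonneg.2 hsw, fun t ht u hu => ?_⟩, ?_⟩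
  · rw [h.2 _ ⟨by linarith [ht.1], by linarith [ht.2]⟩ _ ⟨by linarith [hu.1], by linarith [hu.2]⟩]
    ring_nf
  · rw [← image_image f (s + ·), image_const_add_Icc, add_zero, add_sub_cancel]

theorem isConnected_image {s w : ℝ} (h : IsGeodesicOn f v) (hs : 0 ≤ s) (hsw : s ≤ w)
    (hw : w ≤ v) : IsConnected (f '' Icc s w) :=
  (isConnected_Icc hsw).image f (h.continuousOn.mono (Icc_subset_Icc hs hw))

theorem le_dist {s t r : ℝ} (h : IsGeodesicOn f v) (hs : s ∈ Icc 0 v) (ht : t ∈ Icc 0 v)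
    (hst : s + r ≤ t) : r ≤ dist (f s) (f t) := by
  rw [h.2 s hs t ht, abs_sub_comm]
  exact (le_abs_self _).trans' (by linarith)

end IsGeodesicOn

namespace IsQuasigeodesicOn

variable {lam C : ℝ} {g : ℝ → X} {v : ℝ}

theorem le_mul_dist_add (hg : IsQuasigeodesicOn lam C g v) (hlam : 0 < lam) :
    v ≤ lam * (dist (g 0) (g v) + C) := by
  have hlow := (hg.2 0 ⟨le_rfl, hg.1⟩ v ⟨hg.1, le_rfl⟩).1
  rw [zero_sub, abs_neg, abs_of_nonneg hg.1] at hlow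
  rw [← div_le_iff₀' hlam, div_eq_inv_mul]
  linarith

theorem dist_le_s7 (hg : IsQuasigeodesicOn lam C g v) (hlam : 0 ≤ lam) {t : ℝ}
    (ht : t ∈ Icc 0 v) : dist (g 0) (g t) ≤ lam * v + C := by
  have hup := (hg.2 0 ⟨le_rfl, hg.1⟩ t ht).2
  rw [zero_sub, abs_neg, abs_of_nonneg ht.1] at hup
  nlinarith [ht.2]

theorem exists_dist_lt_of_image_subset_union {A B : Set X} (hg : IsQuasigeodesicOn lam C g v)
    (hlam : 0 < lam) (himg : g '' Icc 0 v ⊆ A ∪ B) (h0 : g 0 ∈ A) (hv : g v ∈ B) {η : ℝ}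
    (hη : 0 < η) : ∃ y ∈ A, ∃ z ∈ B, dist y z < C + η := by
  obtain ⟨s, ⟨hs, hsA⟩, t, ⟨ht, htB⟩, hst⟩ :=
    (isPreconnected_Icc (a := 0) (b := v)).exists_dist_lt_of_subset_union
      (P := g ⁻¹' A) (Q := g ⁻¹' B) (fun t ht => himg ⟨t, ht, rfl⟩)
      ⟨0, ⟨le_rfl, hg.1⟩, h0⟩ ⟨v, ⟨hg.1, le_rfl⟩, hv⟩ (div_pos hη hlam)
  refine ⟨g s, hsA, g t, htB, ?_⟩
  rw [Real.dist_eq] at hst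
  calc dist (g s) (g t) ≤ lam * |s - t| + C := (hg.2 s hs t ht).2
    _ < lam * (η / lam) + C := by gcongr
    _ = C + η := by field_simp; ring

theorem infDist_le_of_separated {A B₁ B₂ : Set X} (hg : IsQuasigeodesicOn lam C g v)
    (hlam : 0 < lam) (himg : g '' Icc 0 v ⊆ A ∪ B₁ ∪ B₂) (h0 : g 0 ∈ B₁) (hv : g v ∈ B₂)
    {η : ℝ} (hη : 0 < η) (hsep : ∀ y ∈ B₁, ∀ z ∈ B₂, C + η ≤ dist y z) :
    infDist (g 0) A ≤ lam * v + C := by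
  by_cases hA : ∃ t ∈ Icc 0 v, g t ∈ A
  · obtain ⟨t, ht, hgt⟩ := hA
    exact (infDist_le_dist_of_mem hgt).trans (hg.dist_le_s7 hlam.le ht)
  · push Not at hA
    have himg' : g '' Icc 0 v ⊆ B₁ ∪ B₂ := by
      rintro _ ⟨t, ht, rfl⟩
      rcases himg ⟨t, ht, rfl⟩ with (hgt | hgt) | hgt
      exacts [absurd hgt (hA t ht), Or.inl hgt, Or.inr hgt]
    obtain ⟨y, hy, z, hz, hyz⟩ := hg.exists_dist_lt_of_image_subset_union hlam himg' h0 hv hη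
    linarith [hsep y hy z hz]

end IsQuasigeodesicOn

theorem isConnected_triangle_sides_cut {a b c : X} {f₁ f₂ f₃ : ℝ → X} {v₁ v₂ v₃ x w : ℝ}
    (h₁ : IsGeodesicFrom f₁ v₁ a b) (h₂ : IsGeodesicFrom f₂ v₂ b c)
    (h₃ : IsGeodesicFrom f₃ v₃ a c) (hx : x ∈ Icc 0 v₂) (hw : w ∈ Icc 0 v₂) :
    IsConnected (f₁ '' Icc 0 v₁ ∪ f₃ '' Icc 0 v₃ ∪ f₂ '' Icc 0 x ∪ f₂ '' Icc w v₂) := by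
  obtain ⟨H₁, ha₁, hb₁⟩ := h₁
  obtain ⟨H₂, hb₂, hc₂⟩ := h₂
  obtain ⟨H₃, ha₃, hc₃⟩ := h₃
  refine .union ?_ (.union ?_ (.union ?_ ?_ ?_) ?_) (H₂.isConnected_image hw.1 hw.2 le_rfl)
  · exact ⟨c, Or.inl (Or.inr (hc₃ ▸ H₃.right_mem_image)), hc₂ ▸ ⟨v₂, ⟨hw.2, le_rfl⟩, rfl⟩⟩
  · exact ⟨b, Or.inl (hb₁ ▸ H₁.right_mem_image), hb₂ ▸ ⟨0, ⟨le_rfl, hx.1⟩, rfl⟩⟩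
  · exact ⟨a, ha₁ ▸ H₁.left_mem_image, ha₃ ▸ H₃.left_mem_image⟩
  · exact H₁.isConnected_image le_rfl H₁.1 le_rfl
  · exact H₃.isConnected_image le_rfl H₃.1 le_rfl
  · exact H₂.isConnected_image le_rfl hx.1 hx.2

theorem infDist_le_of_isQuasigeodesicSubspace_cut {lam C η x v₂ : ℝ} {f : ℝ → X} {A : Set X}
    (hf : IsGeodesicOn f v₂) (hlam : 0 < lam) (hη : 0 < η) (hx : 0 ≤ x)
    (hgap : x + (C + η) ≤ v₂)
    (hY : IsQuasigeodesicSubspace lam C (A ∪ f '' Icc 0 x ∪ f '' Icc (x + (C + η)) v₂)) :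
    infDist (f x) A ≤ lam ^ 2 * (2 * C + η) + C := by
  have hp : f x ∈ f '' Icc 0 x := ⟨x, ⟨hx, le_rfl⟩, rfl⟩
  have hq : f (x + (C + η)) ∈ f '' Icc (x + (C + η)) v₂ := ⟨_, ⟨le_rfl, hgap⟩, rfl⟩
  obtain ⟨g, v, hg, hg0, hgv, himg⟩ := hY _ (Or.inl (Or.inr hp)) _ (Or.inr hq)
  have hC : 0 ≤ C := by simpa using (hg.2 0 ⟨le_rfl, hg.1⟩ 0 ⟨le_rfl, hg.1⟩).2
  have hx' : x ∈ Icc 0 v₂ := ⟨hx, by linarith⟩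
  have hxη : x + (C + η) ∈ Icc 0 v₂ := ⟨by linarith, hgap⟩
  have hsep : ∀ y ∈ f '' Icc 0 x, ∀ z ∈ f '' Icc (x + (C + η)) v₂, C + η ≤ dist y z := by
    rintro _ ⟨s, hs, rfl⟩ _ ⟨t, ht, rfl⟩
    exact hf.le_dist ⟨hs.1, hs.2.trans hx'.2⟩ ⟨hxη.1.trans ht.1, ht.2⟩ (by linarith [hs.2, ht.1])
  have hv : v ≤ lam * (2 * C + η) := by
    have hpq : dist (g 0) (g v) = C + η := by
      rw [hg0, hgv, hf.2 x hx' _ hxη, abs_sub_comm, add_sub_cancel_left, abs_of_pos (by linarith)]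
    calc v ≤ lam * (dist (g 0) (g v) + C) := hg.le_mul_dist_add hlam
      _ = lam * (2 * C + η) := by rw [hpq]; ring
  calc infDist (f x) A ≤ lam * v + C :=
        hg0 ▸ hg.infDist_le_of_separated hlam himg (hg0 ▸ hp) (hgv ▸ hq) hη hsep
    _ ≤ lam ^ 2 * (2 * C + η) + C := by nlinarith

end

theorem hyperbolic_of_four_segment_unions_general {X : Type*} [MetricSpace X]
    (lam C : ℝ) (hlam : 0 < lam) (hC : 0 < C)
    (h : ∀ Y : Set X,
      (∃ S₁ S₂ S₃ S₄ : Set X, IsGeodesicSegment S₁ ∧ IsGeodesicSegment S₂ ∧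
        IsGeodesicSegment S₃ ∧ IsGeodesicSegment S₄ ∧
        Y = S₁ ∪ S₂ ∪ S₃ ∪ S₄ ∧ IsConnected Y) →
      IsQuasigeodesicSubspace lam C Y) :
    IsDeltaHyperbolic X (lam ^ 2 * (2 * C + 1) + C + 1) := by
  intro a b c f₁ f₂ f₃ v₁ v₂ v₃ h₁ h₂ h₃ x hx
  rcases lt_or_ge v₂ (x + (C + 1)) with hnear | hgap
  · have hc : c ∈ f₁ '' Icc 0 v₁ ∪ f₃ '' Icc 0 v₃ := Or.inr (h₃.2.2 ▸ h₃.1.right_mem_image)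
    calc infDist (f₂ x) _ ≤ dist (f₂ x) c := infDist_le_dist_of_mem hc
      _ = v₂ - x := by
        rw [← h₂.2.2, h₂.1.2 x hx v₂ ⟨h₂.1.1, le_rfl⟩, abs_sub_comm,
          abs_of_nonneg (by linarith [hx.2])]
      _ ≤ lam ^ 2 * (2 * C + 1) + C + 1 := by nlinarith [sq_nonneg lam]
  have hw : x + (C + 1) ∈ Icc 0 v₂ := ⟨by linarith [hx.1], hgap⟩
  have hY := h _ ⟨_, _, _, _, h₁.1.isGeodesicSegment_image le_rfl h₁.1.1 le_rfl,
    h₃.1.isGeodesicSegment_image le_rfl h₃.1.1 le_rfl,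
    h₂.1.isGeodesicSegment_image le_rfl hx.1 hx.2, h₂.1.isGeodesicSegment_image hw.1 hgap le_rfl,
    rfl, isConnected_triangle_sides_cut h₁ h₂ h₃ hx hw⟩
  linarith [infDist_le_of_isQuasigeodesicSubspace_cut h₂.1 hlam one_pos hx.1 hgap hY]

/-- If there are λ, C > 0 such that every connected union of four geodesic
segments in a geodesic metric space X is a (λ, C)-quasigeodesic subspace, then X is
δ-hyperbolic with δ = λ²(2C + 1) + C + 1. -/
theorem hyperbolic_of_four_segment_unions {X : Type*} [MetricSpace X]
    (hgeo : IsGeodesicSpace X) (lam C : ℝ) (hlam : 0 < lam) (hC : 0 < C)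
    (h : ∀ Y : Set X,
      (∃ S₁ S₂ S₃ S₄ : Set X, IsGeodesicSegment S₁ ∧ IsGeodesicSegment S₂ ∧
        IsGeodesicSegment S₃ ∧ IsGeodesicSegment S₄ ∧
        Y = S₁ ∪ S₂ ∪ S₃ ∪ S₄ ∧ IsConnected Y) →
      IsQuasigeodesicSubspace lam C Y) :
    IsDeltaHyperbolic X (lam ^ 2 * (2 * C + 1) + C + 1) :=
  hyperbolic_of_four_segment_unions_general lam C hlam hC h
end

section
/- Let X be a geodesic metric space such that for every λ, C > 0 there exist λ', C' > 0 with the property that whenever A and B are (λ, C)-quasigeodesic subspaces of X with A ∩ B ≠ ∅, the union A ∪ B is a (λ', C')-quasigeodesic subspace. Then X is δ-hyperbolic for some δ ≥ 0. -/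
open Set Metric

section RealLine

theorem ContinuousOn.exists_mem_Ico_eq_forall_Ioc_lt {D : ℝ → ℝ} {a b H : ℝ}
    (hD : ContinuousOn D (Icc a b)) (hab : a ≤ b) (ha : D a ≤ H) (hb : H < D b) :
    ∃ c ∈ Ico a b, D c = H ∧ ∀ σ ∈ Ioc c b, H < D σ := by
  set S := Icc a b ∩ D ⁻¹' Iic H
  have hSc : IsCompact S := isCompact_Icc.of_isClosed_subset
    (hD.preimage_isClosed_of_isClosed isClosed_Icc isClosed_Iic) inter_subset_left
  have hcS : sSup S ∈ S := hSc.sSup_mem ⟨a, left_mem_Icc.2 hab, ha⟩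
  set c := sSup S
  have hafter : ∀ σ ∈ Ioc c b, H < D σ := fun σ hσ => lt_of_not_ge fun hσH =>
    hσ.1.not_ge <| le_csSup (bddAbove_Icc.mono inter_subset_left)
      ⟨⟨hcS.1.1.trans hσ.1.le, hσ.2⟩, hσH⟩
  have hcb : c < b := hcS.1.2.lt_of_ne fun hcb => by
    have := hcS.2
    rw [hcb] at this
    exact (lt_irrefl H) (hb.trans_le this)
  refine ⟨c, ⟨hcS.1.1, hcb⟩, le_antisymm hcS.2 (not_lt.1 fun hlt => ?_), hafter⟩
  obtain ⟨σ, hσ, hσH⟩ := intermediate_value_Icc hcb.le (hD.mono (Icc_subset_Icc_left hcS.1.1))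
    ⟨hlt.le, hb.le⟩
  have hcσ : c < σ := hσ.1.lt_of_ne fun hcσ => by rw [← hcσ] at hσH; exact hlt.ne hσH
  exact (hafter σ ⟨hcσ, hσ.2⟩).ne' hσH

theorem ContinuousOn.exists_Icc_eq_eq_forall_le {D : ℝ → ℝ} {a b x H : ℝ}
    (hD : ContinuousOn D (Icc a b)) (hx : x ∈ Icc a b) (ha : D a ≤ H) (hb : D b ≤ H)
    (hxH : H < D x) :
    ∃ l r, a ≤ l ∧ l < x ∧ x < r ∧ r ≤ b ∧ D l = H ∧ D r = H ∧ ∀ σ ∈ Icc l r, H ≤ D σ := by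
  obtain ⟨l, hl, hDl, hleft⟩ :=
    (hD.mono (Icc_subset_Icc_right hx.2)).exists_mem_Ico_eq_forall_Ioc_lt hx.1 ha hxH
  have hDneg : ContinuousOn (fun σ => D (-σ)) (Icc (-b) (-x)) :=
    hD.comp continuousOn_neg fun σ hσ => ⟨by linarith [hσ.2, hx.1], by linarith [hσ.1]⟩
  obtain ⟨c, hc, hDc, hright⟩ :=
    hDneg.exists_mem_Ico_eq_forall_Ioc_lt (neg_le_neg hx.2) (by simpa) (by simpa)
  refine ⟨l, -c, hl.1, hl.2, by linarith [hc.2], by linarith [hc.1], hDl, hDc, fun σ hσ => ?_⟩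
  rcases hσ.1.eq_or_lt with rfl | hlσ
  · exact hDl.ge
  rcases hσ.2.eq_or_lt with rfl | hσr
  · exact hDc.ge
  rcases le_total σ x with hσx | hxσ
  · exact (hleft σ ⟨hlσ, hσx⟩).le
  · simpa using (hright (-σ) ⟨by linarith, by linarith⟩).le

theorem exists_abs_sub_le_of_not {P : ℝ → Prop} {a b ε : ℝ} (hab : a ≤ b) (hε : 0 < ε)
    (ha : P a) (hb : ¬P b) : ∃ s ∈ Icc a b, ∃ t ∈ Icc a b, |s - t| ≤ ε ∧ P s ∧ ¬P t := by
  set S := {t ∈ Icc a b | P t}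
  have hSne : S.Nonempty := ⟨a, left_mem_Icc.2 hab, ha⟩
  have hbdd : BddAbove S := bddAbove_Icc.mono fun t ht => ht.1
  set τ := sSup S
  have hτb : τ ≤ b := csSup_le hSne fun t ht => ht.1.2
  obtain ⟨s, hsS, hs⟩ := exists_lt_of_lt_csSup hSne (by linarith : τ - ε / 2 < τ)
  have hsτ : s ≤ τ := le_csSup hbdd hsS
  have ht : min (τ + ε / 2) b ∈ Icc a b :=
    ⟨le_min (by linarith [hsS.1.1]) hab, min_le_right _ _⟩
  refine ⟨s, hsS.1, _, ht, abs_sub_le_iff.2 ⟨?_, ?_⟩, hsS.2, fun hPt => ?_⟩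
  · linarith [le_min (by linarith : τ ≤ τ + ε / 2) hτb]
  · linarith [min_le_left (τ + ε / 2) b]
  rcases min_cases (τ + ε / 2) b with ⟨hmin, -⟩ | ⟨hmin, -⟩ <;> rw [hmin] at ht hPt
  · linarith [le_csSup hbdd ⟨ht, hPt⟩]
  · exact hb hPt

end RealLine

def HasQuasigeodesicUnions (X : Type*) [MetricSpace X] (lam C lam' C' : ℝ) : Prop :=
  ∀ A B : Set X, IsQuasigeodesicSubspace lam C A → IsQuasigeodesicSubspace lam C B →
    (A ∩ B).Nonempty → IsQuasigeodesicSubspace lam' C' (A ∪ B)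

section

variable {X : Type*} [MetricSpace X]

section Geodesic

variable {f : ℝ → X} {v : ℝ}

theorem IsGeodesicOn.isGeodesicFrom_comp_add (hf : IsGeodesicOn f v) {s t : ℝ} (hs : 0 ≤ s)
    (hst : s ≤ t) (ht : t ≤ v) : IsGeodesicFrom (fun u => f (s + u)) (t - s) (f s) (f t) := by
  refine ⟨⟨sub_nonneg.2 hst, fun x hx y hy => ?_⟩, by simp, by simp⟩
  rw [hf.2 _ ⟨by linarith [hx.1], by linarith [hx.2]⟩ _ ⟨by linarith [hy.1], by linarith [hy.2]⟩]
  ring_nf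

theorem IsGeodesicFrom.symm {a b : X} (hf : IsGeodesicFrom f v a b) :
    IsGeodesicFrom (fun u => f (v - u)) v b a := by
  obtain ⟨⟨hv, hd⟩, ha, hb⟩ := hf
  refine ⟨⟨hv, fun x hx y hy => ?_⟩, by simpa using hb, by simpa using ha⟩
  rw [hd _ ⟨by linarith [hx.2], by linarith [hx.1]⟩ _ ⟨by linarith [hy.2], by linarith [hy.1]⟩,
    ← abs_neg]
  ring_nf

theorem IsGeodesicFrom.dist_le {a b : X} (hf : IsGeodesicFrom f v a b) {u : ℝ}
    (hu : u ∈ Icc 0 v) : dist a (f u) ≤ dist a b := by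
  obtain ⟨⟨hv, hd⟩, rfl, rfl⟩ := hf
  rw [hd 0 ⟨le_rfl, hv⟩ u hu, hd 0 ⟨le_rfl, hv⟩ v ⟨hv, le_rfl⟩]
  simp [abs_of_nonneg hv, abs_of_nonneg hu.1, hu.2]

theorem IsGeodesicOn.isGeodesicSubspace_image_Icc (hf : IsGeodesicOn f v) {s t : ℝ}
    (hs : 0 ≤ s) (ht : t ≤ v) : IsGeodesicSubspace (f '' Icc s t) := by
  have key : ∀ σ ∈ Icc s t, ∀ τ ∈ Icc s t, σ ≤ τ → ∃ (g : ℝ → X) (w : ℝ),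
      IsGeodesicFrom g w (f σ) (f τ) ∧ g '' Icc 0 w ⊆ f '' Icc s t := by
    intro σ hσ τ hτ hστ
    refine ⟨_, _, hf.isGeodesicFrom_comp_add (hs.trans hσ.1) hστ (hτ.2.trans ht), ?_⟩
    rintro _ ⟨u, hu, rfl⟩
    exact ⟨σ + u, ⟨by linarith [hσ.1, hu.1], by linarith [hu.2, hτ.2]⟩, rfl⟩
  rintro _ ⟨σ, hσ, rfl⟩ _ ⟨τ, hτ, rfl⟩
  rcases le_total σ τ with hστ | hτσ
  · exact key σ hσ τ hτ hστ
  · obtain ⟨g, w, hg, hgU⟩ := key τ hτ σ hσ hτσ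
    refine ⟨_, w, hg.symm, ?_⟩
    rintro _ ⟨u, hu, rfl⟩
    exact hgU ⟨w - u, ⟨by linarith [hu.2], by linarith [hu.1]⟩, rfl⟩

theorem IsGeodesicOn.isQuasigeodesicOn (hf : IsGeodesicOn f v) {lam C : ℝ} (hlam : 1 ≤ lam)
    (hC : 0 ≤ C) : IsQuasigeodesicOn lam C f v := by
  refine ⟨hf.1, fun x hx y hy => ?_⟩
  rw [hf.2 x hx y hy]
  have := inv_le_one_of_one_le₀ hlam
  have := abs_nonneg (x - y)
  constructor <;> nlinarith

theorem IsGeodesicSubspace.isQuasigeodesicSubspace {A : Set X} (hA : IsGeodesicSubspace A)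
    {lam C : ℝ} (hlam : 1 ≤ lam) (hC : 0 ≤ C) : IsQuasigeodesicSubspace lam C A := by
  intro a ha b hb
  obtain ⟨f, v, ⟨hf, hfa, hfb⟩, hfA⟩ := hA a ha b hb
  exact ⟨f, v, hf.isQuasigeodesicOn hlam hC, hfa, hfb, hfA⟩

end Geodesic

section Quasigeodesic

variable {lam C : ℝ}

theorem IsQuasigeodesicSubspace.mono {A : Set X} {lam' C' : ℝ}
    (h : IsQuasigeodesicSubspace lam C A) (hlam : 0 < lam) (hlam' : lam ≤ lam') (hC : C ≤ C') :
    IsQuasigeodesicSubspace lam' C' A := by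
  intro a ha b hb
  obtain ⟨f, v, ⟨hv, hf⟩, hfa, hfb, hfA⟩ := h a ha b hb
  refine ⟨f, v, ⟨hv, fun x hx y hy => ?_⟩, hfa, hfb, hfA⟩
  have := inv_anti₀ hlam hlam'
  have := abs_nonneg (x - y)
  obtain ⟨hlow, hup⟩ := hf x hx y hy
  constructor <;> nlinarith

theorem IsQuasigeodesicOn.le_mul_dist_add_s8 {f : ℝ → X} {v : ℝ} (hf : IsQuasigeodesicOn lam C f v)
    (hlam : 0 < lam) : v ≤ lam * (dist (f 0) (f v) + C) := by
  have := (hf.2 0 ⟨le_rfl, hf.1⟩ v ⟨hf.1, le_rfl⟩).1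
  rw [zero_sub, abs_neg, abs_of_nonneg hf.1] at this
  rw [← inv_mul_le_iff₀ hlam]
  linarith

/-- A quasigeodesic in `α ∪ Z` from `p ∈ α` to `q ∈ Z \ α` leaves `α` by a jump of size at most
`lam + C`, at a point that is close to `p` because the quasigeodesic is short. -/
theorem dist_le_of_isQuasigeodesicSubspace_union {α Z : Set X} {E : ℝ} (hlam : 0 < lam)
    (hW : IsQuasigeodesicSubspace lam C (α ∪ Z)) {o p q : X} (hp : p ∈ α) (hq : q ∈ Z)
    (hqα : q ∉ α) (hnear : ∀ y ∈ α, ∀ z ∈ Z, dist y z ≤ lam + C → dist o y ≤ E) :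
    dist o p ≤ E + (lam * lam * (dist p q + C) + C) := by
  obtain ⟨F, w, hF, rfl, rfl, hFW⟩ := hW p (.inl hp) q (.inr hq)
  obtain ⟨s, hs, t, ht, hst, hsα, htα⟩ :=
    exists_abs_sub_le_of_not (P := fun t => F t ∈ α) hF.1 one_pos hp hqα
  have htZ : F t ∈ Z := (hFW ⟨t, ht, rfl⟩).resolve_left htα
  have hjump : dist (F s) (F t) ≤ lam + C := by
    have := (hF.2 s hs t ht).2
    nlinarith
  have hsp : dist (F s) (F 0) ≤ lam * lam * (dist (F 0) (F w) + C) + C := by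
    have hup := (hF.2 s hs 0 ⟨le_rfl, hF.1⟩).2
    rw [sub_zero, abs_of_nonneg hs.1] at hup
    nlinarith [hs.2, hF.le_mul_dist_add_s8 hlam]
  calc dist o (F 0) ≤ dist o (F s) + dist (F s) (F 0) := dist_triangle _ _ _
    _ ≤ _ := add_le_add (hnear _ hsα _ htZ hjump) hsp

end Quasigeodesic

section Hyperbolicity

variable {Λ₁ K₁ Λ₂ K₂ lam C : ℝ}

theorem exists_hasQuasigeodesicUnions_one_le
    (h : ∀ lam C : ℝ, 0 < lam → 0 < C → ∃ lam' C' : ℝ, 0 < lam' ∧ 0 < C' ∧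
      HasQuasigeodesicUnions X lam C lam' C')
    (hlam : 0 < lam) (hC : 0 < C) :
    ∃ lam' C' : ℝ, 1 ≤ lam' ∧ 0 < C' ∧ HasQuasigeodesicUnions X lam C lam' C' := by
  obtain ⟨lam', C', hlam', hC', hU⟩ := h lam C hlam hC
  exact ⟨max lam' 1, C', le_max_right _ _, hC', fun A B hA hB hAB =>
    (hU A B hA hB hAB).mono hlam' (le_max_left _ _) le_rfl⟩

theorem IsGeodesicFrom.dist_le_of_le_infDist (hgeo : IsGeodesicSpace X) {U : Set X}
    (hU : IsQuasigeodesicSubspace Λ₁ K₁ U) (h₂ : HasQuasigeodesicUnions X Λ₁ K₁ Λ₂ K₂)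
    (h₃ : HasQuasigeodesicUnions X Λ₂ K₂ lam C) (hΛ₁ : 1 ≤ Λ₁) (hK₁ : 0 ≤ K₁) (hΛ₂ : 1 ≤ Λ₂)
    (hK₂ : 0 ≤ K₂) (hlam : 0 < lam) (hC : 0 ≤ C) {g : ℝ → X} {v : ℝ} {y z : X}
    (hg : IsGeodesicFrom g v y z) (hy : infDist y U ≤ lam + C + 1)
    (hz : infDist z U ≤ lam + C + 1) (hfar : ∀ u ∈ Icc 0 v, lam + C + 1 ≤ infDist (g u) U) :
    dist y z ≤ 2 * (lam + C + 1) + (lam * lam * (lam + 2 * C + 2) + C) := by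
  set H := lam + C + 1
  have hUne : U.Nonempty := nonempty_iff_ne_empty.2 fun hU => by
    have := hfar 0 ⟨le_rfl, hg.1.1⟩
    rw [hU, infDist_empty] at this
    linarith
  obtain ⟨y', hy'U, hyy'⟩ := (infDist_lt_iff hUne).1 (hy.trans_lt (lt_add_one H))
  obtain ⟨z', hz'U, hzz'⟩ := (infDist_lt_iff hUne).1 (hz.trans_lt (lt_add_one H))
  obtain ⟨b, w, hb⟩ := hgeo y y'
  set α := g '' Icc 0 v
  have hβ : IsQuasigeodesicSubspace Λ₂ K₂ (U ∪ b '' Icc 0 w) :=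
    h₂ U _ hU ((hb.1.isGeodesicSubspace_image_Icc le_rfl le_rfl).isQuasigeodesicSubspace hΛ₁ hK₁)
      ⟨y', hy'U, w, ⟨hb.1.1, le_rfl⟩, hb.2.2⟩
  have hW : IsQuasigeodesicSubspace lam C (α ∪ (U ∪ b '' Icc 0 w)) :=
    h₃ α _ ((hg.1.isGeodesicSubspace_image_Icc le_rfl le_rfl).isQuasigeodesicSubspace hΛ₂ hK₂) hβ
      ⟨y, ⟨0, ⟨le_rfl, hg.1.1⟩, hg.2.1⟩, .inr ⟨0, ⟨le_rfl, hb.1.1⟩, hb.2.1⟩⟩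
  have hfarα : ∀ p ∈ α, H ≤ infDist p U := by
    rintro _ ⟨u, hu, rfl⟩
    exact hfar u hu
  have hz'α : z' ∉ α := fun hz'α => by
    have := hfarα z' hz'α
    rw [infDist_zero_of_mem hz'U] at this
    linarith
  have hnear : ∀ p ∈ α, ∀ p' ∈ U ∪ b '' Icc 0 w, dist p p' ≤ lam + C → dist y p ≤ 2 * H := by
    -- a jump of size `lam + C < H` out of `α` cannot reach `U`, so it lands on the bridge
    rintro p hp p' (hp'U | ⟨u, hu, rfl⟩) hpp'
    · linarith [hfarα p hp, infDist_le_dist_of_mem (x := p) hp'U]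
    · calc dist y p ≤ dist y (b u) + dist (b u) p := dist_triangle _ _ _
        _ ≤ (H + 1) + (lam + C) :=
          add_le_add ((hb.dist_le hu).trans hyy'.le) (by rwa [dist_comm])
        _ = 2 * H := by ring
  have hyz := dist_le_of_isQuasigeodesicSubspace_union hlam hW ⟨v, ⟨hg.1.1, le_rfl⟩, hg.2.2⟩
    (.inl hz'U) hz'α hnear
  have := mul_le_mul_of_nonneg_left (show dist z z' + C ≤ lam + 2 * C + 2 by linarith)
    (mul_self_nonneg lam)
  linarith

theorem isDeltaHyperbolic_of_hasQuasigeodesicUnions (hgeo : IsGeodesicSpace X)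
    (h₁ : HasQuasigeodesicUnions X 1 1 Λ₁ K₁) (h₂ : HasQuasigeodesicUnions X Λ₁ K₁ Λ₂ K₂)
    (h₃ : HasQuasigeodesicUnions X Λ₂ K₂ lam C) (hΛ₁ : 1 ≤ Λ₁) (hK₁ : 0 ≤ K₁) (hΛ₂ : 1 ≤ Λ₂)
    (hK₂ : 0 ≤ K₂) (hlam : 0 < lam) (hC : 0 ≤ C) :
    IsDeltaHyperbolic X (3 * (lam + C + 1) + (lam * lam * (lam + 2 * C + 2) + C)) := by
  intro a b c f₁ f₂ f₃ v₁ v₂ v₃ hf₁ hf₂ hf₃ x hx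
  by_contra! hfar
  set U := f₁ '' Icc 0 v₁ ∪ f₃ '' Icc 0 v₃
  have hU : IsQuasigeodesicSubspace Λ₁ K₁ U :=
    h₁ _ _ ((hf₁.1.isGeodesicSubspace_image_Icc le_rfl le_rfl).isQuasigeodesicSubspace le_rfl
      zero_le_one) ((hf₃.1.isGeodesicSubspace_image_Icc le_rfl le_rfl).isQuasigeodesicSubspace
      le_rfl zero_le_one) ⟨a, ⟨0, ⟨le_rfl, hf₁.1.1⟩, hf₁.2.1⟩, ⟨0, ⟨le_rfl, hf₃.1.1⟩, hf₃.2.1⟩⟩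
  have hbU : b ∈ U := .inl ⟨v₁, ⟨hf₁.1.1, le_rfl⟩, hf₁.2.2⟩
  have hcU : c ∈ U := .inr ⟨v₃, ⟨hf₃.1.1, le_rfl⟩, hf₃.2.2⟩
  have hD : LipschitzOnWith 1 (fun σ => infDist (f₂ σ) U) (Icc 0 v₂) :=
    .of_dist_le_mul fun σ hσ τ hτ => ((lipschitz_infDist_pt U).dist_le_mul _ _).trans_eq
      (by rw [hf₂.1.2 σ hσ τ hτ, Real.dist_eq])
  have hH : 0 ≤ lam + C + 1 := by positivity
  have hD0 : infDist (f₂ 0) U ≤ lam + C + 1 := by rwa [hf₂.2.1, infDist_zero_of_mem hbU]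
  have hDv : infDist (f₂ v₂) U ≤ lam + C + 1 := by rwa [hf₂.2.2, infDist_zero_of_mem hcU]
  have hDx : lam + C + 1 < infDist (f₂ x) U := by
    have : 0 ≤ lam * lam * (lam + 2 * C + 2) := by positivity
    linarith
  obtain ⟨l, r, hl, hlx, hxr, hr, hDl, hDr, hmoat⟩ :=
    hD.continuousOn.exists_Icc_eq_eq_forall_le hx hD0 hDv hDx
  have hxl : infDist (f₂ x) U - infDist (f₂ l) U ≤ x - l := by
    have := hD.dist_le_mul x hx l ⟨hl, hlx.le.trans hx.2⟩
    rw [Real.dist_eq, Real.dist_eq, NNReal.coe_one, one_mul, abs_of_pos (sub_pos.2 hlx)] at this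
    exact (le_abs_self _).trans this
  have hlr := (hf₂.1.isGeodesicFrom_comp_add hl (hlx.trans hxr).le hr).dist_le_of_le_infDist hgeo
    hU h₂ h₃ hΛ₁ hK₁ hΛ₂ hK₂ hlam hC hDl.le hDr.le fun u hu =>
      hmoat (l + u) ⟨by linarith [hu.1], by linarith [hu.2]⟩
  rw [hf₂.1.2 l ⟨hl, hlx.le.trans hx.2⟩ r ⟨hl.trans (hlx.trans hxr).le, hr⟩,
    abs_of_neg (by linarith)] at hlr
  -- `r - l > x - l`, and `x - l` exceeds the bound `hlr` since `f₂ x` is `δ`-far from `U`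
  linarith

end Hyperbolicity

end

/-- If in a geodesic metric space, for all λ, C > 0 there are λ', C' > 0 such
that unions of intersecting (λ, C)-quasigeodesic subspaces are (λ', C')-quasigeodesic
subspaces, then the space is δ-hyperbolic for some δ ≥ 0. -/
theorem hyperbolic_of_union_of_quasigeodesic_subspaces {X : Type*} [MetricSpace X]
    (hgeo : IsGeodesicSpace X)
    (h : ∀ lam C : ℝ, 0 < lam → 0 < C → ∃ lam' C' : ℝ, 0 < lam' ∧ 0 < C' ∧
      ∀ A B : Set X, IsQuasigeodesicSubspace lam C A → IsQuasigeodesicSubspace lam C B →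
        (A ∩ B).Nonempty → IsQuasigeodesicSubspace lam' C' (A ∪ B)) :
    ∃ δ : ℝ, 0 ≤ δ ∧ IsDeltaHyperbolic X δ := by
  obtain ⟨Λ₁, K₁, hΛ₁, hK₁, h₁⟩ := exists_hasQuasigeodesicUnions_one_le h one_pos one_pos
  obtain ⟨Λ₂, K₂, hΛ₂, hK₂, h₂⟩ :=
    exists_hasQuasigeodesicUnions_one_le h (zero_lt_one.trans_le hΛ₁) hK₁
  obtain ⟨lam, C, hlam, hC, h₃⟩ := h Λ₂ K₂ (zero_lt_one.trans_le hΛ₂) hK₂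
  exact ⟨_, by positivity, isDeltaHyperbolic_of_hasQuasigeodesicUnions hgeo h₁ h₂ h₃ hΛ₁ hK₁.le
    hΛ₂ hK₂.le hlam hC.le⟩
end
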